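/- Let R be a commutative ring, P_0 a finitely generated projective R-module of constant rank n, a : P_0 ⊕ R → R an epimorphism, and s, t : R → P_0 ⊕ R two sections of a. Then the isomorphisms θ_s, θ_t : Λ^{n+1}(P_0 ⊕ R) → Λ^n(ker a) induced by i_s and i_t coincide; equivalently, the form χ_a defined via a section does not depend on the choice of section. -/

import Mathlib

open ExteriorAlgebra

section Aux

variable {R P₀ : Type*} [CommRing R] [AddCommGroup P₀] [Module R P₀]

private lemma exists_denoms (p : Ideal R) [p.IsPrime] {κ : Type*} [Fintype κ]
    (b : Module.Basis κ (Localization.AtPrime p) (LocalizedModule p.primeCompl P₀)) :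
    ∃ w : κ → P₀, ∀ y : P₀, ∃ (U : p.primeCompl) (A : κ → R),
      (U : R) • y = ∑ j, A j • w j := by
  classical
  have hb : ∀ j : κ, ∃ q : P₀ × p.primeCompl, LocalizedModule.mk q.1 q.2 = b j := by
    intro j
    induction b j using LocalizedModule.induction_on with
    | _ m s => exact ⟨(m, s), rfl⟩
  choose q hq using hb
  refine ⟨fun j => (q j).1, fun y => ?_⟩
  set S := Localization.AtPrime p
  obtain ⟨t, ht⟩ := IsLocalization.exist_integer_multiples_of_finite p.primeCompl
    (fun j : κ => b.repr (LocalizedModule.mk y 1) j)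
  choose aa haa using ht
  set σ : p.primeCompl := ∏ j, (q j).2 with hσ
  set Q : κ → R := fun j => ∏ j' ∈ Finset.univ.erase j, ((q j').2 : R) with hQ
  have hσj : ∀ j, (σ : R) = ((q j).2 : R) * Q j := by
    intro j
    rw [hσ, hQ, Submonoid.coe_finset_prod]
    exact (Finset.mul_prod_erase _ _ (Finset.mem_univ j)).symm
  have hterm : ∀ j : κ, ((t : R) * (σ : R)) • (b.repr (LocalizedModule.mk y 1) j • b j)
      = LocalizedModule.mk ((aa j * Q j) • (q j).1) (1 : p.primeCompl) := by
    intro j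
    calc ((t : R) * (σ : R)) • (b.repr (LocalizedModule.mk y 1) j • b j)
        = (((t : R) * (σ : R)) • b.repr (LocalizedModule.mk y 1) j) • b j :=
          (smul_assoc _ _ _).symm
      _ = (((σ : R) * (t : R)) • b.repr (LocalizedModule.mk y 1) j) • b j := by
          rw [mul_comm]
      _ = ((σ : R) • ((t : R) • b.repr (LocalizedModule.mk y 1) j)) • b j := by
          rw [← smul_smul]
      _ = ((σ : R) • (algebraMap R S) (aa j)) • b j := by rw [← haa j]
      _ = ((algebraMap R S) ((σ : R) * aa j)) • b j := by
          rw [Algebra.smul_def, ← map_mul]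
      _ = (((σ : R) * aa j)) • b j := by rw [algebraMap_smul]
      _ = ((aa j * Q j)) • (((q j).2 : R) • b j) := by
          rw [smul_smul, hσj j]; ring_nf
      _ = ((aa j * Q j)) • LocalizedModule.mk ((q j).1) (1 : p.primeCompl) := by
          rw [← hq j, LocalizedModule.smul'_mk, ← Submonoid.smul_def,
            LocalizedModule.mk_cancel]
      _ = LocalizedModule.mk ((aa j * Q j) • (q j).1) (1 : p.primeCompl) := by
          rw [LocalizedModule.smul'_mk]
  have key : LocalizedModule.mk ((((t : R) * (σ : R))) • y) (1 : p.primeCompl)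
      = LocalizedModule.mk (∑ j, (aa j * Q j) • (q j).1) (1 : p.primeCompl) := by
    have h2 : LocalizedModule.mk (∑ j, (aa j * Q j) • (q j).1) (1 : p.primeCompl)
        = ∑ j, LocalizedModule.mk ((aa j * Q j) • (q j).1) (1 : p.primeCompl) := by
      rw [← LocalizedModule.mkLinearMap_apply, map_sum]
      simp only [LocalizedModule.mkLinearMap_apply]
    rw [h2, ← LocalizedModule.smul'_mk, ← Module.Basis.sum_repr b (LocalizedModule.mk y 1),
      Finset.smul_sum]
    exact Finset.sum_congr rfl fun j _ => hterm j
  obtain ⟨u, hu⟩ := LocalizedModule.mk_eq.mp key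
  simp only [one_smul] at hu
  refine ⟨u * (t * σ), fun j => (u : R) * (aa j * Q j), ?_⟩
  have hu' : (u : R) • (((t : R) * (σ : R)) • y)
      = (u : R) • ∑ j, (aa j * Q j) • (q j).1 := by
    simpa only [Submonoid.smul_def] using hu
  calc ((u * (t * σ) : p.primeCompl) : R) • y
      = (u : R) • (((t : R) * (σ : R)) • y) := by
        push_cast
        rw [smul_smul]
    _ = (u : R) • ∑ j, (aa j * Q j) • (q j).1 := hu'
    _ = ∑ j, ((u : R) * (aa j * Q j)) • (q j).1 := by
        rw [Finset.smul_sum]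
        exact Finset.sum_congr rfl fun j _ => smul_smul _ _ _

private lemma wedge_zero [Module.Finite R P₀] [Module.Projective R P₀] (n : ℕ)
    (hrank : ∀ q : PrimeSpectrum R, Module.rankAtStalk (R := R) P₀ q = n)
    (v : Fin (n + 2) → P₀ × R) : ExteriorAlgebra.ιMulti R (n + 2) v = 0 := by
  classical
  set z := ExteriorAlgebra.ιMulti R (n + 2) v with hzdef
  by_contra hzne
  have hI : LinearMap.ker (LinearMap.toSpanSingleton R (ExteriorAlgebra R (P₀ × R)) z) ≠ ⊤ := by
    intro h
    apply hzne
    have h1 : (1 : R) ∈ LinearMap.ker (LinearMap.toSpanSingleton R _ z) := h ▸ Submodule.mem_top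
    simpa using h1
  obtain ⟨m, hm, hIm⟩ := Ideal.exists_le_maximal _ hI
  haveI : m.IsPrime := hm.isPrime
  set S := Localization.AtPrime m
  set P := LocalizedModule m.primeCompl P₀ with hP
  haveI : Module.Finite S P :=
    Module.Finite.of_isLocalizedModule m.primeCompl (LocalizedModule.mkLinearMap m.primeCompl P₀)
  haveI : Module.Projective S P :=
    Module.projective_of_isLocalizedModule m.primeCompl (LocalizedModule.mkLinearMap m.primeCompl P₀)
  haveI : Module.FinitePresentation S P := Module.finitePresentation_of_projective S P
  haveI : Module.Free S P := Module.free_of_flat_of_isLocalRing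
  have hcard : Fintype.card (Module.Free.ChooseBasisIndex S P) = n := by
    rw [← Module.finrank_eq_card_chooseBasisIndex]
    exact hrank ⟨m, hm.isPrime⟩
  set κ := Module.Free.ChooseBasisIndex S P with hκ
  obtain ⟨w, hw⟩ := exists_denoms m (Module.Free.chooseBasis S P)
  choose U A hUA using fun i => hw (v i).1
  set W : κ ⊕ Unit → P₀ × R := Sum.elim (fun j => (w j, (0 : R))) (fun _ => ((0 : P₀), (1 : R)))
    with hW
  set C : Fin (n + 2) → κ ⊕ Unit → R :=
    (fun i => Sum.elim (fun j => A i j) (fun _ => (U i : R) * (v i).2)) with hC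
  have hexp : ∀ i, (U i : R) • v i = ∑ bb : κ ⊕ Unit, C i bb • W bb := by
    intro i
    rw [Fintype.sum_sum_type]
    apply Prod.ext
    · simp [hW, hC, Prod.fst_sum, hUA i]; congr!
    · simp [hW, hC, Prod.snd_sum, mul_comm]
  have hzero : (∏ i, (U i : R)) • z = 0 := by
    have h1 : (∏ i, (U i : R)) • z
        = ExteriorAlgebra.ιMulti R (n + 2) (fun i => (U i : R) • v i) := by
      rw [hzdef]
      exact ((ExteriorAlgebra.ιMulti R (n + 2)).toMultilinearMap.map_smul_univ
        (fun i => (U i : R)) v).symm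
    rw [h1]
    have h2 : (fun i => (U i : R) • v i) = fun i => ∑ bb : κ ⊕ Unit, C i bb • W bb :=
      funext hexp
    rw [h2]
    rw [show (ExteriorAlgebra.ιMulti R (n + 2)) (fun i => ∑ bb : κ ⊕ Unit, C i bb • W bb)
      = (ExteriorAlgebra.ιMulti R (n + 2)).toMultilinearMap
          (fun i => ∑ bb : κ ⊕ Unit, C i bb • W bb) from rfl]
    rw [MultilinearMap.map_sum]
    refine Finset.sum_eq_zero fun G _ => ?_
    obtain ⟨i, i', hne, hGeq⟩ := Fintype.exists_ne_map_eq_of_card_lt G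
      (by simp [hcard]; exact (Fintype.card_congr' hκ).trans_le hcard.le)
    rw [show ((ExteriorAlgebra.ιMulti R (n + 2)).toMultilinearMap
        (fun i => C i (G i) • W (G i)))
      = (ExteriorAlgebra.ιMulti R (n + 2)).toMultilinearMap
        (fun i => C i (G i) • (fun i' => W (G i')) i) from rfl]
    rw [MultilinearMap.map_smul_univ]
    rw [show ((ExteriorAlgebra.ιMulti R (n + 2)).toMultilinearMap (fun i => W (G i)))
      = (ExteriorAlgebra.ιMulti R (n + 2)) (fun i => W (G i)) from rfl]
    rw [AlternatingMap.map_eq_zero_of_eq (ExteriorAlgebra.ιMulti R (n + 2))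
      (fun i'' => W (G i'')) (i := i) (j := i') (by simp only [hGeq]) hne, smul_zero]
  have hmem : (((∏ i, U i : m.primeCompl) : R)) ∈ m := by
    apply hIm
    rw [LinearMap.mem_ker, LinearMap.toSpanSingleton_apply]
    rw [Submonoid.coe_finset_prod]
    exact hzero
  exact (∏ i, U i : m.primeCompl).2 hmem

private lemma mapg_ιMulti {N : Type*} [AddCommGroup N] [Module R N]
    (d : Module.Dual R N) (W : N) (k : ℕ) (v : Fin k → N) :
    ExteriorAlgebra.map (LinearMap.id + d.smulRight W) (ExteriorAlgebra.ιMulti R k v)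
      = ExteriorAlgebra.ιMulti R k v
        + ExteriorAlgebra.ι R W *
          CliffordAlgebra.contractLeft (Q := (0 : QuadraticForm R N)) d
            (ExteriorAlgebra.ιMulti R k v) := by
  induction k with
  | zero =>
      rw [ExteriorAlgebra.ιMulti_zero_apply, map_one, CliffordAlgebra.contractLeft_one,
        mul_zero, add_zero]
  | succ k ih =>
      rw [ExteriorAlgebra.ιMulti_succ_apply, map_mul, ExteriorAlgebra.map_apply_ι,
        ih (Matrix.vecTail v)]
      set y := ExteriorAlgebra.ιMulti R k (Matrix.vecTail v) with hy
      set c := CliffordAlgebra.contractLeft (Q := (0 : QuadraticForm R N)) d y with hcc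
      have h0 : (LinearMap.id + d.smulRight W : N →ₗ[R] N) (v 0) = v 0 + d (v 0) • W := rfl
      rw [h0, map_add, map_smul, CliffordAlgebra.contractLeft_ι_mul]
      have hswap : ∀ x : ExteriorAlgebra R N,
          ExteriorAlgebra.ι R (v 0) * (ExteriorAlgebra.ι R W * x)
            = -(ExteriorAlgebra.ι R W * (ExteriorAlgebra.ι R (v 0) * x)) := by
        intro x
        rw [← mul_assoc, ← mul_assoc, eq_neg_of_add_eq_zero_left (ι_add_mul_swap (v 0) W),
          neg_mul]
      have hWW : ∀ x : ExteriorAlgebra R N,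
          ExteriorAlgebra.ι R W * (ExteriorAlgebra.ι R W * x) = 0 := by
        intro x
        rw [← mul_assoc, ι_sq_zero, zero_mul]
      simp only [mul_add, add_mul, smul_mul_assoc, mul_smul_comm, mul_assoc, hswap, hWW,
        smul_zero, mul_sub, smul_sub, add_zero]
      abel

end Aux

set_option maxHeartbeats 1000000 in
private theorem theta_aux {R P₀ : Type*} [CommRing R]
    [AddCommGroup P₀] [Module R P₀] [Module.Finite R P₀] [Module.Projective R P₀]
    (n : ℕ) (hrank : ∀ p : PrimeSpectrum R, Module.rankAtStalk (R := R) P₀ p = n)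
    (a : (P₀ × R) →ₗ[R] R)
    (s : R →ₗ[R] (P₀ × R)) (hs : a ∘ₗ s = LinearMap.id)
    (t : R →ₗ[R] (P₀ × R)) (ht : a ∘ₗ t = LinearMap.id)
    (hcs : ∀ c : P₀ × R, (LinearMap.id - s ∘ₗ a : (P₀ × R) →ₗ[R] (P₀ × R)) c ∈ LinearMap.ker a)
    (hct : ∀ c : P₀ × R, (LinearMap.id - t ∘ₗ a : (P₀ × R) →ₗ[R] (P₀ × R)) c ∈ LinearMap.ker a) :
    ∀ x ∈ ⋀[R]^(n + 1) (P₀ × R),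
      ExteriorAlgebra.map
        (((LinearMap.id - s ∘ₗ a).codRestrict (LinearMap.ker a) hcs).prod a) x =
      ExteriorAlgebra.map
        (((LinearMap.id - t ∘ₗ a).codRestrict (LinearMap.ker a) hct).prod a) x := by
  classical
  intro x hx
  have has : ∀ r : R, a (s r) = r := fun r => LinearMap.congr_fun hs r
  have hat : ∀ r : R, a (t r) = r := fun r => LinearMap.congr_fun ht r
  set IS : (P₀ × R) →ₗ[R] (↥(LinearMap.ker a) × R) :=
    ((LinearMap.id - s ∘ₗ a).codRestrict (LinearMap.ker a) hcs).prod a with hIS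
  set IT : (P₀ × R) →ₗ[R] (↥(LinearMap.ker a) × R) :=
    ((LinearMap.id - t ∘ₗ a).codRestrict (LinearMap.ker a) hct).prod a with hIT
  set d : Module.Dual R (↥(LinearMap.ker a) × R) := LinearMap.snd R ↥(LinearMap.ker a) R with hd
  set w₀ : P₀ × R := s 1 - t 1 with hw₀
  have haw₀ : a w₀ = 0 := by simp [hw₀, map_sub, has 1, hat 1]
  set Wk : ↥(LinearMap.ker a) × R := IS w₀ with hWk
  have hdWk : d Wk = 0 := haw₀
  set g : (↥(LinearMap.ker a) × R) →ₗ[R] (↥(LinearMap.ker a) × R) :=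
    LinearMap.id + d.smulRight Wk with hg
  have hpt : ∀ p : P₀ × R, IT p = g (IS p) := by
    intro p
    have hgval : g (IS p) = IS p + a p • Wk := by
      simp [hg, hd, hIS, LinearMap.prod_apply]
    rw [hgval]
    apply Prod.ext
    · apply Subtype.ext
      have hs1 : s (a p) = a p • s 1 := by rw [← map_smul, smul_eq_mul, mul_one]
      have ht1 : t (a p) = a p • t 1 := by rw [← map_smul, smul_eq_mul, mul_one]
      have hsw : s (a w₀) = 0 := by rw [haw₀, map_zero]
      show p - t (a p) = (p - s (a p)) + a p • (w₀ - s (a w₀))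
      rw [hsw, sub_zero, hw₀, hs1, ht1, smul_sub]
      abel
    · show a p = a p + a p • (a w₀)
      rw [haw₀, smul_zero, add_zero]
  rw [← ExteriorAlgebra.ιMulti_span_fixedDegree] at hx
  induction hx using Submodule.span_induction with
  | mem u hu =>
      obtain ⟨v, rfl⟩ := hu
      rw [ExteriorAlgebra.map_apply_ιMulti, ExteriorAlgebra.map_apply_ιMulti]
      have hcomp : IT ∘ v = g ∘ (IS ∘ v) := funext fun i => hpt (v i)
      rw [hcomp,
        show ExteriorAlgebra.ιMulti R (n + 1) (g ∘ (IS ∘ v))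
          = ExteriorAlgebra.map g (ExteriorAlgebra.ιMulti R (n + 1) (IS ∘ v)) from
          (ExteriorAlgebra.map_apply_ιMulti g _).symm,
        hg, mapg_ιMulti]
      have hy0 : ExteriorAlgebra.ι R Wk * ExteriorAlgebra.ιMulti R (n + 1) (IS ∘ v) = 0 := by
        have hz2 : ExteriorAlgebra.ιMulti R (n + 2) (Matrix.vecCons w₀ v) = 0 :=
          wedge_zero n hrank _
        calc ExteriorAlgebra.ι R Wk * ExteriorAlgebra.ιMulti R (n + 1) (IS ∘ v)
            = ExteriorAlgebra.map IS (ExteriorAlgebra.ι R w₀)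
              * ExteriorAlgebra.map IS (ExteriorAlgebra.ιMulti R (n + 1) v) := by
              rw [ExteriorAlgebra.map_apply_ι, ExteriorAlgebra.map_apply_ιMulti]
          _ = ExteriorAlgebra.map IS
              (ExteriorAlgebra.ι R w₀ * ExteriorAlgebra.ιMulti R (n + 1) v) :=
              (map_mul _ _ _).symm
          _ = ExteriorAlgebra.map IS (ExteriorAlgebra.ιMulti R (n + 2) (Matrix.vecCons w₀ v)) := by
              conv_rhs => rw [ExteriorAlgebra.ιMulti_succ_apply, Matrix.tail_cons,
                Matrix.cons_val_zero]
          _ = 0 := by rw [hz2, map_zero]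
      have h := CliffordAlgebra.contractLeft_ι_mul (d := d) Wk
        (ExteriorAlgebra.ιMulti R (n + 1) (IS ∘ v))
      rw [hy0, map_zero, hdWk, zero_smul, zero_sub] at h
      have hc0 : ExteriorAlgebra.ι R Wk
          * CliffordAlgebra.contractLeft (Q := (0 : QuadraticForm R _)) d
            (ExteriorAlgebra.ιMulti R (n + 1) (IS ∘ v)) = 0 := neg_eq_zero.mp h.symm
      rw [hc0, add_zero]
  | zero => rw [map_zero, map_zero]
  | add u w hu hw ihu ihw => rw [map_add, map_add, ihu, ihw]
  | smul r u hu ihu => rw [map_smul, map_smul, ihu]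

/-- For `P₀` finitely generated projective of constant rank `n`, an epimorphism
`a : P₀ ⊕ R → R` and two sections `s, t` of `a`, the isomorphisms
`θ_s, θ_t : Λ^{n+1}(P₀ ⊕ R) ≅ Λⁿ(ker a)` induced by `i_s` and `i_t` coincide; equivalently,
`i_s` and `i_t` induce the same map on top exterior powers `Λ^{n+1}`. -/
theorem theta_independent_of_section {R P₀ : Type*} [CommRing R]
    [AddCommGroup P₀] [Module R P₀] [Module.Finite R P₀] [Module.Projective R P₀]
    (n : ℕ) (hrank : ∀ p : PrimeSpectrum R, Module.rankAtStalk (R := R) P₀ p = n)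
    (a : (P₀ × R) →ₗ[R] R) (ha : Function.Surjective a)
    (s : R →ₗ[R] (P₀ × R)) (hs : a ∘ₗ s = LinearMap.id)
    (t : R →ₗ[R] (P₀ × R)) (ht : a ∘ₗ t = LinearMap.id) :
    ∀ x ∈ ⋀[R]^(n + 1) (P₀ × R),
      ExteriorAlgebra.map
        (((LinearMap.id - s ∘ₗ a).codRestrict (LinearMap.ker a) (fun c => by
            have h := LinearMap.congr_fun hs (a c)
            simp only [LinearMap.comp_apply, LinearMap.id_apply] at h
            simp [LinearMap.mem_ker, map_sub, h])).prod a) x =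
      ExteriorAlgebra.map
        (((LinearMap.id - t ∘ₗ a).codRestrict (LinearMap.ker a) (fun c => by
            have h := LinearMap.congr_fun ht (a c)
            simp only [LinearMap.comp_apply, LinearMap.id_apply] at h
            simp [LinearMap.mem_ker, map_sub, h])).prod a) x :=
  theta_aux n hrank a s hs t ht _ _
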